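/- arXiv:1501.06598 — 2 statements merged into one kernel-verified Lean document; each statement's English description precedes it below -/
import Mathlib

section
/- Let W be a finite set of real-valued trees of depth n (predictable processes w_t(ε) depending only on ε_1,...,ε_{t-1}), and let η be a [-G,G]-valued tree of depth n. Then E_ε[ max_{w ∈ W} Σ_{t=1}^n ε_t η_t(ε) w_t(ε) ] ≤ G·√(2 log|W| · max_{w ∈ W, ε ∈ {±1}^n} Σ_{t=1}^n w_t(ε)²). -/
/-!
Since `cosh u ≤ exp (u ^ 2 / 2)`, for a predictable tree `x` the process
`exp (∑ s ≤ t, ε s * x s - x s ^ 2 / 2)` is a supermartingale, so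
`𝔼 exp (λ ∑ t, ε t η t w t) ≤ exp (λ ^ 2 G ^ 2 R / 2)` for each `w ∈ W`, where `R` bounds
`∑ t, w t ^ 2`. Jensen's inequality and `exp (λ max) ≤ ∑ exp (λ ·)` turn this into
`𝔼 max ≤ (log |W| + λ ^ 2 G ^ 2 R / 2) / λ`, and optimizing in `λ > 0` gives the bound.
-/

open Finset Real

def rademacher (b : Bool) : ℝ := if b then 1 else -1

def IsPredictable {n : ℕ} (x : (Fin n → Bool) → Fin n → ℝ) : Prop :=
  ∀ t : Fin n, ∀ ε ε' : Fin n → Bool, (∀ s : Fin n, s < t → ε s = ε' s) → x ε t = x ε' t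

namespace IsPredictable

variable {n : ℕ} {x y : (Fin n → Bool) → Fin n → ℝ}

lemma mul (hx : IsPredictable x) (hy : IsPredictable y) :
    IsPredictable fun ε t => x ε t * y ε t :=
  fun t ε ε' h => congrArg₂ (· * ·) (hx t ε ε' h) (hy t ε ε' h)

lemma const_mul (hx : IsPredictable x) (c : ℝ) : IsPredictable fun ε t => c * x ε t :=
  fun t ε ε' h => congrArg (c * ·) (hx t ε ε' h)

lemma apply_zero {x : (Fin (n + 1) → Bool) → Fin (n + 1) → ℝ} (hx : IsPredictable x)
    (ε ε' : Fin (n + 1) → Bool) : x ε 0 = x ε' 0 :=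
  hx 0 ε ε' fun s hs => absurd hs (Fin.not_lt_zero s)

lemma subtree {x : (Fin (n + 1) → Bool) → Fin (n + 1) → ℝ} (hx : IsPredictable x) (b : Bool) :
    IsPredictable fun ε t => x (Fin.cons b ε) t.succ := by
  intro t ε ε' h
  refine hx _ _ _ fun s hs => ?_
  cases s using Fin.cases with
  | zero => rfl
  | succ s => exact h s (Fin.succ_lt_succ_iff.mp hs)

theorem sum_prod_le (φ : Bool → ℝ → ℝ) (hφ : ∀ b c, 0 ≤ φ b c) {C : ℝ}
    (hC : ∀ c, ∑ b, φ b c ≤ C) (hx : IsPredictable x) :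
    ∑ ε, ∏ t, φ (ε t) (x ε t) ≤ C ^ n := by
  induction n with
  | zero => simp
  | succ n ih =>
    have hC₀ : 0 ≤ C := (sum_nonneg fun b _ => hφ b 0).trans (hC 0)
    set c := x (fun _ => false) 0
    calc ∑ ε, ∏ t, φ (ε t) (x ε t)
        = ∑ b, ∑ ε, φ b c * ∏ t, φ (ε t) (x (Fin.cons b ε) t.succ) := by
          rw [← (Fin.consEquiv fun _ => Bool).sum_comp, Fintype.sum_prod_type]
          simp [Fin.prod_univ_succ, Fin.consEquiv, hx.apply_zero _ (fun _ => false), c]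
      _ = ∑ b, φ b c * ∑ ε, ∏ t, φ (ε t) (x (Fin.cons b ε) t.succ) := by
          simp only [mul_sum]
      _ ≤ ∑ b, φ b c * C ^ n := by
          gcongr with b
          · exact hφ b c
          · exact ih (hx.subtree b)
      _ ≤ C ^ (n + 1) := by
          rw [← sum_mul, pow_succ']
          gcongr
          exact hC c

end IsPredictable

lemma sum_exp_rademacher_mul_sub_sq_le (c : ℝ) : ∑ b, exp (rademacher b * c - c ^ 2 / 2) ≤ 2 := by
  have hcosh := cosh_le_exp_half_sq c
  rw [cosh_eq, div_le_iff₀ two_pos] at hcosh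
  simp only [Fintype.sum_bool, rademacher, if_true, Bool.false_eq_true, if_false, one_mul,
    neg_one_mul, exp_sub, ← add_div]
  rwa [div_le_iff₀ (exp_pos _), mul_comm]

theorem IsPredictable.sum_exp_sum_rademacher_mul_le {n : ℕ} {x : (Fin n → Bool) → Fin n → ℝ}
    (hx : IsPredictable x) {σ2 : ℝ} (hσ : ∀ ε, ∑ t, x ε t ^ 2 ≤ σ2) :
    ∑ ε, exp (∑ t, rademacher (ε t) * x ε t) ≤ 2 ^ n * exp (σ2 / 2) := by
  have hterm : ∀ ε, exp (∑ t, rademacher (ε t) * x ε t)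
      ≤ (∏ t, exp (rademacher (ε t) * x ε t - x ε t ^ 2 / 2)) * exp (σ2 / 2) := by
    intro ε
    rw [← exp_sum, ← exp_add, exp_le_exp, sum_sub_distrib, ← sum_div]
    linarith [hσ ε]
  calc ∑ ε, exp (∑ t, rademacher (ε t) * x ε t)
      ≤ ∑ ε, (∏ t, exp (rademacher (ε t) * x ε t - x ε t ^ 2 / 2)) * exp (σ2 / 2) :=
        sum_le_sum fun ε _ => hterm ε
    _ ≤ 2 ^ n * exp (σ2 / 2) := by
        rw [← sum_mul]
        gcongr
        exact hx.sum_prod_le (fun b c => exp (rademacher b * c - c ^ 2 / 2))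
          (fun _ _ => (exp_pos _).le) sum_exp_rademacher_mul_sub_sq_le

theorem exp_sup'_le_sum_exp {α : Type*} (W : Finset α) (hW : W.Nonempty) (f : α → ℝ) :
    exp (W.sup' hW f) ≤ ∑ w ∈ W, exp (f w) := by
  obtain ⟨w, hw, hmax⟩ := exists_mem_eq_sup' hW f
  rw [hmax]
  exact single_le_sum (f := fun w => exp (f w)) (fun _ _ => (exp_pos _).le) hw

theorem exp_sum_div_card_le {ι : Type*} [Fintype ι] [Nonempty ι] (g : ι → ℝ) :
    exp ((∑ i, g i) / Fintype.card ι) ≤ (∑ i, exp (g i)) / Fintype.card ι := by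
  have hcard : (0 : ℝ) < Fintype.card ι := by exact_mod_cast Fintype.card_pos
  have hweights : ∑ _i : ι, (Fintype.card ι : ℝ)⁻¹ = 1 := by
    rw [sum_const, card_univ, nsmul_eq_mul, mul_inv_cancel₀ hcard.ne']
  have hjensen := convexOn_exp.map_sum_le (t := univ) (p := g) (fun _ _ => by positivity)
    hweights (fun _ _ => Set.mem_univ _)
  simp only [smul_eq_mul, ← mul_sum] at hjensen
  rwa [inv_mul_eq_div, inv_mul_eq_div] at hjensen

theorem sum_sup'_div_card_le {ι α : Type*} [Fintype ι] [Nonempty ι] (W : Finset α)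
    (hW : W.Nonempty) (F : α → ι → ℝ) {l K : ℝ} (hl : 0 < l)
    (hF : ∀ w ∈ W, ∑ i, exp (l * F w i) ≤ Fintype.card ι * exp K) :
    (∑ i, W.sup' hW fun w => F w i) / Fintype.card ι ≤ (log W.card + K) / l := by
  have hcard : (0 : ℝ) < Fintype.card ι := by exact_mod_cast Fintype.card_pos
  have hW₀ : (0 : ℝ) < W.card := by exact_mod_cast hW.card_pos
  have hexp : exp (l * ((∑ i, W.sup' hW fun w => F w i) / Fintype.card ι)) ≤ W.card * exp K :=
    calc exp (l * ((∑ i, W.sup' hW fun w => F w i) / Fintype.card ι))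
        = exp ((∑ i, W.sup' hW fun w => l * F w i) / Fintype.card ι) := by
          simp only [mul_div_assoc', mul_sum, mul₀_sup' hl.le]
      _ ≤ (∑ i, exp (W.sup' hW fun w => l * F w i)) / Fintype.card ι := exp_sum_div_card_le _
      _ ≤ (∑ i, ∑ w ∈ W, exp (l * F w i)) / Fintype.card ι := by
          gcongr with i
          exact exp_sup'_le_sum_exp W hW _
      _ ≤ (∑ _w ∈ W, Fintype.card ι * exp K) / Fintype.card ι := by
          rw [sum_comm]
          gcongr with w hw
          exact hF w hw
      _ = W.card * exp K := by
          rw [sum_const, nsmul_eq_mul]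
          field_simp
  rw [le_div_iff₀ hl, mul_comm, ← log_exp K, ← log_mul hW₀.ne' (exp_pos K).ne', ← exp_le_exp,
    exp_log (by positivity)]
  exact hexp

open Filter Topology in
theorem le_sqrt_of_forall_le_add_sq_mul_div {S L c : ℝ} (hL : 0 ≤ L) (hc : 0 ≤ c)
    (h : ∀ l, 0 < l → S ≤ (L + l ^ 2 * c / 2) / l) : S ≤ √(2 * L * c) := by
  -- `l = √(2 L c) / c` is optimal when `L, c > 0`; perturbing both by `δ` covers `L c = 0`.
  have hpert : ∀ δ > 0, S ≤ √(2 * (L + δ) * (c + δ)) := by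
    intro δ hδ
    set B := √(2 * (L + δ) * (c + δ))
    have hB : 0 < B := sqrt_pos.mpr (by positivity)
    have hBsq : B ^ 2 = 2 * (L + δ) * (c + δ) := sq_sqrt (by positivity)
    calc S ≤ (L + (B / (c + δ)) ^ 2 * c / 2) / (B / (c + δ)) := h _ (by positivity)
      _ ≤ (L + δ + (B / (c + δ)) ^ 2 * (c + δ) / 2) / (B / (c + δ)) := by gcongr <;> linarith
      _ = B := by
          field_simp
          linear_combination -hBsq
  have hlim : Tendsto (fun δ => √(2 * (L + δ) * (c + δ))) (𝓝[>] 0) (𝓝 √(2 * L * c)) := by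
    refine tendsto_nhdsWithin_of_tendsto_nhds ?_
    simpa using ((continuous_const.mul (continuous_const.add continuous_id)).mul
      (continuous_const.add continuous_id)).sqrt.tendsto (0 : ℝ)
  exact ge_of_tendsto hlim (eventually_nhdsWithin_of_forall hpert)

theorem IsPredictable.sum_exp_mul_sum_rademacher_mul_mul_le {n : ℕ}
    {η w : (Fin n → Bool) → Fin n → ℝ} (hη : IsPredictable η) (hw : IsPredictable w) {G R : ℝ}
    (hηG : ∀ ε t, |η ε t| ≤ G) (hwR : ∀ ε, ∑ t, w ε t ^ 2 ≤ R) (l : ℝ) :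
    ∑ ε, exp (l * ∑ t, rademacher (ε t) * η ε t * w ε t)
      ≤ 2 ^ n * exp (l ^ 2 * (G ^ 2 * R) / 2) := by
  have hsq : ∀ ε, ∑ t, (l * (η ε t * w ε t)) ^ 2 ≤ l ^ 2 * (G ^ 2 * R) := fun ε =>
    calc ∑ t, (l * (η ε t * w ε t)) ^ 2 = l ^ 2 * ∑ t, η ε t ^ 2 * w ε t ^ 2 := by
          simp only [mul_sum, mul_pow]
      _ ≤ l ^ 2 * ∑ t, G ^ 2 * w ε t ^ 2 := by
          refine mul_le_mul_of_nonneg_left (sum_le_sum fun t _ => ?_) (sq_nonneg l)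
          have hη2 := pow_le_pow_left₀ (abs_nonneg _) (hηG ε t) 2
          rw [sq_abs] at hη2
          exact mul_le_mul_of_nonneg_right hη2 (sq_nonneg _)
      _ ≤ l ^ 2 * (G ^ 2 * R) := by
          rw [← mul_sum]
          gcongr
          exact hwR ε
  simpa only [mul_sum, mul_assoc, mul_left_comm l] using
    ((hη.mul hw).const_mul l).sum_exp_sum_rademacher_mul_le hsq

/-- Maximal inequality for sequential Rademacher averages over a finite set of
predictable trees, with a [−G,G]-valued multiplier tree η:
E max_{w∈W} Σ_t ε_t η_t(ε) w_t(ε) ≤ G √(2 log|W| · max_{w,ε} Σ_t w_t(ε)²). -/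
theorem finite_class_maximal_inequality {n : ℕ}
    (W : Finset ((Fin n → Bool) → Fin n → ℝ)) (hW : W.Nonempty)
    (hpred : ∀ w ∈ W, ∀ t : Fin n, ∀ ε ε' : Fin n → Bool,
      (∀ s : Fin n, s < t → ε s = ε' s) → w ε t = w ε' t)
    (G : ℝ) (η : (Fin n → Bool) → Fin n → ℝ)
    (hη : ∀ ε t, |η ε t| ≤ G)
    (hηpred : ∀ t : Fin n, ∀ ε ε' : Fin n → Bool,
      (∀ s : Fin n, s < t → ε s = ε' s) → η ε t = η ε' t) :
    (∑ ε : Fin n → Bool,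
        W.sup' hW fun w => ∑ t, (if ε t then (1 : ℝ) else -1) * η ε t * w ε t) / 2 ^ n
      ≤ G * Real.sqrt (2 * Real.log W.card *
          (W.sup' hW fun w =>
            Finset.univ.sup' Finset.univ_nonempty
              fun ε : Fin n → Bool => ∑ t, (w ε t) ^ 2)) := by
  rcases n.eq_zero_or_pos with rfl | hn
  · simp
  have hG : 0 ≤ G := (abs_nonneg _).trans (hη (fun _ => false) ⟨0, hn⟩)
  set R := W.sup' hW fun w => univ.sup' univ_nonempty fun ε : Fin n → Bool => ∑ t, w ε t ^ 2
  have hR : ∀ w ∈ W, ∀ ε, ∑ t, w ε t ^ 2 ≤ R := fun w hw ε =>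
    le_sup'_of_le _ hw (le_sup' (fun ε => ∑ t, w ε t ^ 2) (mem_univ ε))
  have hR₀ : 0 ≤ R :=
    (sum_nonneg fun _ _ => sq_nonneg _).trans (hR _ hW.choose_spec fun _ => false)
  have hL : 0 ≤ log W.card := log_nonneg (by exact_mod_cast hW.card_pos)
  have hbound := le_sqrt_of_forall_le_add_sq_mul_div hL (by positivity : 0 ≤ G ^ 2 * R)
    fun l hl => by
      simpa using sum_sup'_div_card_le W hW
        (fun w ε => ∑ t, rademacher (ε t) * η ε t * w ε t) hl fun w hw => by
          simpa using IsPredictable.sum_exp_mul_sum_rademacher_mul_mul_le hηpred (hpred w hw) hη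
            (hR w hw) l
  rwa [show 2 * log W.card * (G ^ 2 * R) = G ^ 2 * (2 * log W.card * R) by ring,
    sqrt_mul (sq_nonneg G), sqrt_sq hG] at hbound
end

section
/- (Lower bound from shattering with Lipschitz offset.) Fix β > 0 and n ∈ ℕ. Suppose there is an X-valued tree x of depth n β-shattered by F with witness tree μ, i.e., for every ε ∈ {±1}^n there exists f^ε ∈ F with ε_t(f^ε(x_t(ε)) - μ_t(ε)) ≥ β/2 for all t. Let R > 0 and suppose the offset function satisfies Δ̄(z) ≤ (R/2)|z| for all relevant z. Then E_ε sup_{f ∈ F} [ Σ_{t=1}^n (R ε_t (f(x_t(ε)) - μ_t(ε)) - Δ̄(f(x_t(ε)) - μ_t(ε))) ] ≥ R n β / 4. -/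
/-- Lower bound from shattering with a Lipschitz offset: if the tree x is
β-shattered by F with witness μ and Δ̄(z) ≤ (R/2)|z|, then the expected offset
supremum E_ε sup_{f∈F} Σ_t (Rε_t(f(x_t(ε))−μ_t(ε)) − Δ̄(f(x_t(ε))−μ_t(ε))) is at
least Rnβ/4 (expressed via arbitrary pointwise upper bounds g of the supremum). -/
theorem shattering_lower_bound {X : Type*} (F : Set (X → ℝ)) {n : ℕ}
    (β R : ℝ) (hβ : 0 < β) (hR : 0 < R)
    (x : (Fin n → Bool) → Fin n → X) (μ : (Fin n → Bool) → Fin n → ℝ)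
    (Δbar : ℝ → ℝ) (hΔ : ∀ z : ℝ, Δbar z ≤ R / 2 * |z|)
    (hshatter : ∀ ε : Fin n → Bool, ∃ f ∈ F, ∀ t : Fin n,
      β / 2 ≤ (if ε t then (1 : ℝ) else -1) * (f (x ε t) - μ ε t)) :
    ∀ g : (Fin n → Bool) → ℝ,
      (∀ ε : Fin n → Bool, ∀ f ∈ F,
        (∑ t, (R * (if ε t then (1 : ℝ) else -1) * (f (x ε t) - μ ε t)
            - Δbar (f (x ε t) - μ ε t))) ≤ g ε) →
      R * n * β / 4 ≤ (∑ ε : Fin n → Bool, g ε) / 2 ^ n := by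
  intro g hg
  have hgl : ∀ ε : Fin n → Bool, R * n * β / 4 ≤ g ε := by
    intro ε
    obtain ⟨f, hfF, hf⟩ := hshatter ε
    refine le_trans ?_ (hg ε f hfF)
    have key : ∀ t : Fin n, R * β / 4 ≤
        R * (if ε t then (1 : ℝ) else -1) * (f (x ε t) - μ ε t)
          - Δbar (f (x ε t) - μ ε t) := by
      intro t
      set s : ℝ := if ε t then (1 : ℝ) else -1 with hs
      set u : ℝ := f (x ε t) - μ ε t with hu
      have hsu : β / 2 ≤ s * u := hf t
      have habs : |u| = s * u := by
        rcases Bool.eq_false_or_eq_true (ε t) with h | h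
        · have hs' : s = 1 := by simp [hs, h]
          rw [hs'] at hsu ⊢
          rw [abs_of_nonneg (by linarith)]; ring
        · have hs' : s = -1 := by simp [hs, h]
          rw [hs'] at hsu ⊢
          rw [abs_of_nonpos (by linarith)]; ring
      have := hΔ u
      rw [habs] at this
      nlinarith
    calc R * n * β / 4 = ∑ _t : Fin n, R * β / 4 := by
          rw [Finset.sum_const, Finset.card_univ, Fintype.card_fin, nsmul_eq_mul]; ring
      _ ≤ _ := Finset.sum_le_sum fun t _ => key t
  have hsum : (2 ^ n : ℝ) * (R * n * β / 4) ≤ ∑ ε : Fin n → Bool, g ε := by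
    calc (2 ^ n : ℝ) * (R * n * β / 4)
        = ∑ _ε : Fin n → Bool, R * n * β / 4 := by
          rw [Finset.sum_const, Finset.card_univ, nsmul_eq_mul]
          norm_num
      _ ≤ _ := Finset.sum_le_sum fun ε _ => hgl ε
  rw [le_div_iff₀ (by positivity : (0:ℝ) < 2 ^ n)]
  linarith [hsum]
end
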